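/- arXiv:2006.01502 — 9 statements merged into one kernel-verified Lean document; each statement's English description precedes it below -/
import Mathlib

section
/- Let N ≥ 1 and suppose the integer interval [1, N] is partitioned into n sumfree parts X_1, …, X_n. For each i with X_i nonempty, let A_i = ΔX_i be the discrete derivative of X_i. Then the set of block sums of A_i can be covered by at most n − 1 sumfree subsets of ℤ. -/
/-- A subset `S` of an abelian group is sumfree if there are no `x, y, z ∈ S`
with `x + y = z` (here `x = y` is allowed). -/
def Sumfree {G : Type*} [AddCommGroup G] (S : Set G) : Prop :=
  ∀ x ∈ S, ∀ y ∈ S, x + y ∉ S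

/-- `B` is a block of `A`: a nonempty consecutive subsequence. -/
def IsBlock {G : Type*} (B A : List G) : Prop :=
  B ≠ [] ∧ ∃ L R : List G, A = L ++ B ++ R

/-- The set of block sums of the finite sequence `A`. -/
def blockSums {G : Type*} [AddCommGroup G] (A : List G) : Set G :=
  {s | ∃ B : List G, IsBlock B A ∧ B.sum = s}

/-- `X` can be covered by `n` sumfree subsets. -/
def CoveredBySumfree {G : Type*} [AddCommGroup G] (n : ℕ) (X : Set G) : Prop :=
  ∃ C : Fin n → Set G, (∀ i, Sumfree (C i)) ∧ X ⊆ ⋃ i, C i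

/-- The discrete derivative of a finite set `X ⊂ ℤ`: the sequence of successive
jumps `x_1 - x_0, x_2 - x_1, …, x_r - x_{r-1}` where `x_0 < x_1 < ⋯ < x_r`
are the elements of `X` in increasing order. -/
def deltaList (X : Finset ℤ) : List ℤ :=
  List.zipWith (fun a b => b - a) (X.sort (· ≤ ·)) (X.sort (· ≤ ·)).tail

/-!
A block of `ΔX` telescopes to `y - x` for two elements `x < y` of `X`. When `X = X_i` is a
part of a sumfree partition of `[1, N]`, such a difference lies in `[1, N]` but not in `X_i`
(as `x + (y - x) = y`), so the `n - 1` parts `X_j`, `j ≠ i`, cover all block sums.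
-/

theorem Sumfree.sub_notMem {G : Type*} [AddCommGroup G] {S : Set G} (hS : Sumfree S)
    {x y : G} (hx : x ∈ S) (hy : y ∈ S) : y - x ∉ S := fun hyx =>
  hS x hx (y - x) hyx (by rwa [add_sub_cancel])

theorem coveredBySumfree_of_forall_exists_ne {G : Type*} [AddCommGroup G] {n : ℕ}
    {C : Fin n → Set G} (hC : ∀ j, Sumfree (C j)) (i : Fin n) {S : Set G}
    (hS : ∀ d ∈ S, ∃ j ≠ i, d ∈ C j) : CoveredBySumfree (n - 1) S := by
  cases n with
  | zero => exact i.elim0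
  | succ n =>
    refine ⟨fun k => C (i.succAbove k), fun k => hC _, fun d hd => ?_⟩
    obtain ⟨j, hji, hj⟩ := hS d hd
    obtain ⟨k, rfl⟩ := Fin.exists_succAbove_eq hji
    exact Set.mem_iUnion.mpr ⟨k, hj⟩

namespace List

variable {G : Type*} [AddCommGroup G]

def diffs (s : List G) : List G := zipWith (fun a b => b - a) s s.tail

@[simp] theorem diffs_cons_cons (a b : G) (t : List G) :
    diffs (a :: b :: t) = (b - a) :: diffs (b :: t) := rfl

theorem exists_sum_eq_sub_of_prefix_diffs :
    ∀ {a : G} {s B : List G}, B ≠ [] → B <+: diffs (a :: s) → ∃ y ∈ s, B.sum = y - a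
  | a, [], B, hB, hpre => absurd (prefix_nil.mp hpre) hB
  | a, b :: t, B, hB, hpre => by
    obtain ⟨B', rfl, hB'⟩ :=
      (prefix_cons_iff.mp (diffs_cons_cons a b t ▸ hpre)).resolve_left hB
    rcases eq_or_ne B' [] with rfl | hB'ne
    · exact ⟨b, mem_cons_self, by simp⟩
    · obtain ⟨y, hy, hsum⟩ := exists_sum_eq_sub_of_prefix_diffs hB'ne hB'
      exact ⟨y, mem_cons_of_mem b hy, by rw [sum_cons, hsum]; abel⟩

theorem exists_sum_eq_sub_of_infix_diffs :
    ∀ {s B : List G}, B ≠ [] → B <:+: diffs s → ∃ x y, [x, y] <+ s ∧ B.sum = y - x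
  | [], B, hB, hinf => absurd (infix_nil.mp hinf) hB
  | [a], B, hB, hinf => absurd (infix_nil.mp hinf) hB
  | a :: b :: t, B, hB, hinf => by
    rcases infix_cons_iff.mp (diffs_cons_cons a b t ▸ hinf) with hpre | hinf'
    · obtain ⟨y, hy, hsum⟩ := exists_sum_eq_sub_of_prefix_diffs hB (diffs_cons_cons a b t ▸ hpre)
      exact ⟨a, y, (singleton_sublist.mpr hy).cons_cons a, hsum⟩
    · obtain ⟨x, y, hxy, hsum⟩ := exists_sum_eq_sub_of_infix_diffs hB hinf'
      exact ⟨x, y, hxy.cons a, hsum⟩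

end List

theorem deltaList_eq_diffs (X : Finset ℤ) : deltaList X = (X.sort (· ≤ ·)).diffs := rfl

theorem exists_lt_sub_eq_of_mem_blockSums_deltaList {X : Finset ℤ} {d : ℤ}
    (hd : d ∈ blockSums (deltaList X)) : ∃ x ∈ X, ∃ y ∈ X, x < y ∧ d = y - x := by
  obtain ⟨B, ⟨hB, L, R, hLR⟩, rfl⟩ := hd
  rw [deltaList_eq_diffs] at hLR
  obtain ⟨x, y, hxy, hsum⟩ := List.exists_sum_eq_sub_of_infix_diffs hB ⟨L, R, hLR.symm⟩
  have hmem : ∀ z ∈ [x, y], z ∈ X := fun z hz => (Finset.mem_sort _).mp (hxy.subset hz)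
  exact ⟨x, hmem x (by simp), y, hmem y (by simp),
    List.pairwise_pair.mp ((Finset.sortedLT_sort X).pairwise.sublist hxy), hsum⟩

theorem blockSums_deltaList_covered_general (N : ℤ) (n : ℕ)
    (X : Fin n → Finset ℤ) (hsf : ∀ i, Sumfree ((X i : Set ℤ)))
    (hcov : (⋃ i, (X i : Set ℤ)) = Set.Icc 1 N)
    (i : Fin n) :
    CoveredBySumfree (n - 1) (blockSums (deltaList (X i))) := by
  have hIcc : ∀ z ∈ X i, z ∈ Set.Icc 1 N := fun z hz =>
    hcov ▸ Set.mem_iUnion_of_mem i (Finset.mem_coe.mpr hz)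
  refine coveredBySumfree_of_forall_exists_ne hsf i fun d hd => ?_
  obtain ⟨x, hx, y, hy, hxy, rfl⟩ := exists_lt_sub_eq_of_mem_blockSums_deltaList hd
  have hyx : y - x ∈ Set.Icc 1 N := by
    have hx1 := (hIcc x hx).1
    have hyN := (hIcc y hy).2
    constructor <;> omega
  obtain ⟨j, hj⟩ := Set.mem_iUnion.mp (hcov ▸ hyx)
  refine ⟨j, ?_, hj⟩
  rintro rfl
  exact (hsf j).sub_notMem hx hy hj

/-- If `[1, N]` is partitioned into `n` sumfree parts `X_1, …, X_n`, then for
each `i` with `X_i` nonempty, the set of block sums of `A_i = ΔX_i` can be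
covered by at most `n - 1` sumfree subsets of `ℤ`. -/
theorem blockSums_deltaList_covered (N : ℤ) (hN : 1 ≤ N) (n : ℕ)
    (X : Fin n → Finset ℤ) (hsf : ∀ i, Sumfree ((X i : Set ℤ)))
    (hdisj : Pairwise (Function.onFun Disjoint X))
    (hcov : (⋃ i, (X i : Set ℤ)) = Set.Icc 1 N)
    (i : Fin n) (hi : (X i).Nonempty) :
    CoveredBySumfree (n - 1) (blockSums (deltaList (X i))) :=
  blockSums_deltaList_covered_general N n X hsf hcov i
end

section
/- Let G be an abelian group and let A be a finite sequence in G of length at least 5. Then the set Â of block sums of A cannot be covered by 2 sumfree subsets of G (i.e. sd(Â) ≥ 3). -/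

lemma bool_eq_of_ne_of_ne : ∀ (v x y : Bool), x ≠ v → y ≠ v → x = y := by decide

lemma pigeon (g : Fin 5 → Bool) :
    ∃ a b c : Fin 5, a < b ∧ b < c ∧ g a = g b ∧ g b = g c := by
  revert g; decide

lemma ramsey33 (f : Fin 6 → Fin 6 → Bool) :
    ∃ i j k : Fin 6, i < j ∧ j < k ∧ f i j = f j k ∧ f i j = f i k := by
  obtain ⟨a, b, c, hab, hbc, g1, g2⟩ := pigeon (fun t => f 0 t.succ)
  have ha : (0 : Fin 6) < a.succ := Fin.succ_pos a
  have hab' : a.succ < b.succ := by simpa [Fin.succ_lt_succ_iff] using hab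
  have hbc' : b.succ < c.succ := by simpa [Fin.succ_lt_succ_iff] using hbc
  by_cases h1 : f a.succ b.succ = f 0 a.succ
  · exact ⟨0, a.succ, b.succ, ha, hab', h1.symm, g1⟩
  by_cases h2 : f b.succ c.succ = f 0 a.succ
  · exact ⟨0, b.succ, c.succ, Fin.succ_pos b, hbc', (h2.trans g1).symm, g1.symm.trans (g1.trans g2)⟩
  by_cases h3 : f a.succ c.succ = f 0 a.succ
  · exact ⟨0, a.succ, c.succ, ha, lt_trans hab' hbc', h3.symm, g1.trans g2⟩
  · exact ⟨a.succ, b.succ, c.succ, hab', hbc',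
      bool_eq_of_ne_of_ne _ _ _ h1 h2, bool_eq_of_ne_of_ne _ _ _ h1 h3⟩

lemma mem_blockSums {G : Type*} [AddCommGroup G] (A : List G) {i j : ℕ}
    (hij : i < j) (hj : j ≤ A.length) :
    (A.take j).sum - (A.take i).sum ∈ blockSums A := by
  refine ⟨(A.take j).drop i, ⟨?_, A.take i, A.drop j, ?_⟩, ?_⟩
  · have : ((A.take j).drop i).length = j - i := by
      simp [List.length_drop, List.length_take]; omega
    intro h
    rw [h] at this
    simp at this; omega
  · have h1 : A.take i = (A.take j).take i := by
      rw [List.take_take, min_eq_left hij.le]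
    rw [h1, List.take_append_drop, List.take_append_drop]
  · have h1 : A.take i = (A.take j).take i := by
      rw [List.take_take, min_eq_left hij.le]
    have hs : ((A.take j).take i).sum + ((A.take j).drop i).sum = (A.take j).sum := by
      rw [← List.sum_append, List.take_append_drop]
    rw [← h1] at hs
    exact eq_sub_of_add_eq' hs

/-- If `A` has length at least `5`, then `Â` cannot be covered by `2` sumfree
subsets of `G`, i.e. `sd(Â) ≥ 3`. -/
theorem not_coveredBySumfree_two_of_length_ge_five {G : Type*} [AddCommGroup G]
    (A : List G) (hA : 5 ≤ A.length) : ¬ CoveredBySumfree 2 (blockSums A) := by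
  classical
  rintro ⟨C, hC, hsub⟩
  set p : Fin 6 → G := fun n => (A.take n.val).sum with hp
  have hmem : ∀ i j : Fin 6, i < j → p j - p i ∈ blockSums A := by
    intro i j h
    exact mem_blockSums A h (le_trans (by omega : (j : ℕ) ≤ 5) hA)
  set f : Fin 6 → Fin 6 → Bool := fun i j => decide (p j - p i ∈ C 0) with hf
  have hcol : ∀ i j : Fin 6, i < j → p j - p i ∈ C (if f i j then 0 else 1) := by
    intro i j h
    have := hsub (hmem i j h)
    rw [Set.mem_iUnion] at this
    obtain ⟨t, ht⟩ := this
    by_cases h0 : p j - p i ∈ C 0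
    · simp [hf, h0]
    · have : f i j = false := by simp [hf, h0]
      rw [this]
      fin_cases t
      · exact absurd ht h0
      · simpa using ht
  obtain ⟨i, j, k, hij, hjk, e1, e2⟩ := ramsey33 f
  have hx := hcol i j hij
  have hy := hcol j k hjk
  have hz := hcol i k (lt_trans hij hjk)
  rw [← e1] at hy
  rw [← e2] at hz
  have hsum : (p j - p i) + (p k - p j) = p k - p i := by abel
  have := hC (if f i j then 0 else 1) _ hx _ hy
  rw [hsum] at this
  exact this hz
end

section
/- Let G be an abelian group, let n ≥ 1, and let A = (a_1, …, a_N) be a sequence in G whose entries are linearly independent over ℤ (i.e. the only integer relation c_1·a_1 + ⋯ + c_N·a_N = 0 with c_i ∈ ℤ is the trivial one). Suppose there exists an n-coloring of the edges of the complete graph on vertex set {1, …, N+1} with no monochromatic triangle. Then the set Â of block sums of A can be covered by n sumfree subsets of G (i.e. sd(Â) ≤ n). -/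
theorem Nat.Ico_adjacent_of_disjoint_of_union_eq_Ico {a b c d e f : ℕ} (hab : a < b)
    (hcd : c < d) (hdisj : Disjoint (Finset.Ico a b) (Finset.Ico c d))
    (hunion : Finset.Ico a b ∪ Finset.Ico c d = Finset.Ico e f) :
    (b = c ∧ e = a ∧ f = d) ∨ (d = a ∧ e = c ∧ f = b) := by
  have H : ∀ t, (e ≤ t ∧ t < f ↔ (a ≤ t ∧ t < b) ∨ (c ≤ t ∧ t < d)) ∧
      ¬((a ≤ t ∧ t < b) ∧ (c ≤ t ∧ t < d)) := fun t =>
    ⟨by simpa using (Finset.ext_iff.1 hunion t).symm,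
      fun ⟨h₁, h₂⟩ => Finset.disjoint_left.1 hdisj (Finset.mem_Ico.2 h₁) (Finset.mem_Ico.2 h₂)⟩
  have := H a; have := H c; have := H e; have := H b; have := H d
  have := H (b - 1); have := H (d - 1)
  omega

theorem LinearIndependent.disjoint_and_union_eq_of_sum_add_sum_eq {ι G : Type*}
    [AddCommGroup G] [DecidableEq ι] {v : ι → G} (hv : LinearIndependent ℤ v)
    {s t u : Finset ι} (h : ∑ i ∈ s, v i + ∑ i ∈ t, v i = ∑ i ∈ u, v i) :
    Disjoint s t ∧ s ∪ t = u := by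
  set F := s ∪ t ∪ u
  have sum_eq : ∀ r ⊆ F, ∑ i ∈ F, (if i ∈ r then (1 : ℤ) else 0) • v i = ∑ i ∈ r, v i := by
    intro r hr
    simp only [ite_smul, one_smul, zero_smul, Finset.sum_ite_mem, Finset.inter_eq_right.2 hr]
  have coeff : ∀ i ∈ F, (if i ∈ s then (1 : ℤ) else 0) + (if i ∈ t then 1 else 0) -
      (if i ∈ u then 1 else 0) = 0 := by
    refine linearIndependent_iff'.1 hv F _ ?_
    simp only [sub_smul, add_smul, Finset.sum_sub_distrib, Finset.sum_add_distrib]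
    rw [sum_eq s (by intro; simp +contextual [F]), sum_eq t (by intro; simp +contextual [F]),
      sum_eq u (by intro; simp +contextual [F]), h, sub_self]
  constructor
  · refine Finset.disjoint_left.2 fun i hs ht => ?_
    have := coeff i (by simp [F, hs])
    split_ifs at this <;> omega
  · ext i
    by_cases hi : i ∈ F
    · have := coeff i hi
      simp only [Finset.mem_union]
      split_ifs at this <;> simp_all
    · simp_all [F]

theorem blockSums_eq_sub_take {G : Type*} [AddCommGroup G] (l : List G) :
    blockSums l = {s | ∃ i m, i < m ∧ m ≤ l.length ∧ (l.take m).sum - (l.take i).sum = s} := by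
  ext s
  constructor
  · rintro ⟨B, ⟨hB, L, R, rfl⟩, rfl⟩
    refine ⟨L.length, L.length + B.length, by simpa [List.length_pos_iff] using hB,
      by simp, ?_⟩
    rw [← List.length_append, List.take_left, List.append_assoc, List.take_left,
      List.sum_append, add_sub_cancel_left]
  · rintro ⟨i, m, him, hm, rfl⟩
    have htake : l.take i ++ (l.drop i).take (m - i) = l.take m := by
      rw [← List.take_add, Nat.add_sub_cancel' him.le]
    refine ⟨(l.drop i).take (m - i), ⟨?_, l.take i, l.drop m, ?_⟩, ?_⟩
    · simp [← List.length_eq_zero_iff]; omega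
    · rw [htake, List.take_append_drop]
    · rw [← htake, List.sum_append, add_sub_cancel_left]

def blockIndices (N i m : ℕ) : Finset (Fin N) := {j | i ≤ (j : ℕ) ∧ (j : ℕ) < m}

theorem map_valEmbedding_blockIndices {N i m : ℕ} (hm : m ≤ N) :
    (blockIndices N i m).map Fin.valEmbedding = Finset.Ico i m := by
  ext t
  simp only [blockIndices, Finset.mem_map, Finset.mem_filter, Finset.mem_univ, true_and,
    Fin.valEmbedding_apply, Finset.mem_Ico]
  exact ⟨by rintro ⟨j, hj, rfl⟩; exact hj, fun ht => ⟨⟨t, by omega⟩, ht, rfl⟩⟩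

theorem sum_take_ofFn_sub_sum_take_ofFn {G : Type*} [AddCommGroup G] {N i m : ℕ}
    (A : Fin N → G) (him : i ≤ m) :
    ((List.ofFn A).take m).sum - ((List.ofFn A).take i).sum = ∑ j ∈ blockIndices N i m, A j := by
  rw [List.sum_take_ofFn, List.sum_take_ofFn, sub_eq_iff_eq_add',
    ← Finset.sum_filter_add_sum_filter_not _ (fun j : Fin N => (j : ℕ) < i)]
  simp only [blockIndices, Finset.filter_filter]
  congr 2 <;> ext j <;> simp <;> omega

theorem blockSums_ofFn {G : Type*} [AddCommGroup G] {N : ℕ} (A : Fin N → G) :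
    blockSums (List.ofFn A) =
      {s | ∃ i m, i < m ∧ m ≤ N ∧ ∑ j ∈ blockIndices N i m, A j = s} := by
  simp_rw [blockSums_eq_sub_take, List.length_ofFn]
  ext s
  exact exists₂_congr fun i m => and_congr_right fun him => by
    rw [sum_take_ofFn_sub_sum_take_ofFn A him.le]

def blockColorClass {G κ : Type*} [AddCommGroup G] {N : ℕ} (A : Fin N → G) (χ : ℕ → ℕ → κ)
    (c : κ) : Set G :=
  {s | ∃ i m, i < m ∧ m ≤ N ∧ χ (i + 1) (m + 1) = c ∧ ∑ j ∈ blockIndices N i m, A j = s}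

theorem sumfree_blockColorClass {G κ : Type*} [AddCommGroup G] {N : ℕ} {A : Fin N → G}
    {χ : ℕ → ℕ → κ} (hA : LinearIndependent ℤ A)
    (hχ : ∀ i j k : ℕ, 1 ≤ i → i < j → j < k → k ≤ N + 1 → ¬(χ i j = χ j k ∧ χ i j = χ i k))
    (c : κ) : Sumfree (blockColorClass A χ c) := by
  rintro _ ⟨i₁, m₁, h₁, hm₁, hc₁, rfl⟩ _ ⟨i₂, m₂, h₂, hm₂, hc₂, rfl⟩
    ⟨i₃, m₃, -, hm₃, hc₃, hsum⟩
  obtain ⟨hdisj, hunion⟩ := hA.disjoint_and_union_eq_of_sum_add_sum_eq hsum.symm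
  rw [← Finset.disjoint_map Fin.valEmbedding, map_valEmbedding_blockIndices hm₁,
    map_valEmbedding_blockIndices hm₂] at hdisj
  replace hunion := congrArg (Finset.map Fin.valEmbedding) hunion
  rw [Finset.map_union, map_valEmbedding_blockIndices hm₁, map_valEmbedding_blockIndices hm₂,
    map_valEmbedding_blockIndices hm₃] at hunion
  rcases Nat.Ico_adjacent_of_disjoint_of_union_eq_Ico h₁ h₂ hdisj hunion with
    ⟨hadj, hi₃, hm₃⟩ | ⟨hadj, hi₃, hm₃⟩
  · subst i₂ i₃ m₃
    exact hχ (i₁ + 1) (m₁ + 1) (m₂ + 1) (by omega) (by omega) (by omega) (by omega)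
      ⟨hc₁.trans hc₂.symm, hc₁.trans hc₃.symm⟩
  · subst i₁ i₃ m₃
    exact hχ (i₂ + 1) (m₂ + 1) (m₁ + 1) (by omega) (by omega) (by omega) (by omega)
      ⟨hc₂.trans hc₁.symm, hc₂.trans hc₃.symm⟩

theorem coveredBySumfree_of_linearIndependent_general {G : Type*} [AddCommGroup G]
    (n N : ℕ) (A : Fin N → G) (hli : LinearIndependent ℤ A)
    (hχ : ∃ χ : ℕ → ℕ → Fin n, ∀ i j k : ℕ,
      1 ≤ i → i < j → j < k → k ≤ N + 1 → ¬(χ i j = χ j k ∧ χ i j = χ i k)) :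
    CoveredBySumfree n (blockSums (List.ofFn A)) := by
  obtain ⟨χ, hχ⟩ := hχ
  refine ⟨blockColorClass A χ, sumfree_blockColorClass hli hχ, ?_⟩
  rw [blockSums_ofFn]
  rintro _ ⟨i, m, him, hm, rfl⟩
  exact Set.mem_iUnion.2 ⟨χ (i + 1) (m + 1), i, m, him, hm, rfl, rfl⟩

/-- If the entries of `A = (a_1, …, a_N)` are linearly independent over `ℤ` and
there is an `n`-coloring of the edges of the complete graph on `{1, …, N+1}`
with no monochromatic triangle, then `Â` can be covered by `n` sumfree subsets. -/
theorem coveredBySumfree_of_linearIndependent {G : Type*} [AddCommGroup G]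
    (n N : ℕ) (hn : 1 ≤ n) (A : Fin N → G) (hli : LinearIndependent ℤ A)
    (hχ : ∃ χ : ℕ → ℕ → Fin n, ∀ i j k : ℕ,
      1 ≤ i → i < j → j < k → k ≤ N + 1 → ¬(χ i j = χ j k ∧ χ i j = χ i k)) :
    CoveredBySumfree n (blockSums (List.ofFn A)) :=
  coveredBySumfree_of_linearIndependent_general n N A hli hχ
end

section
/- Let n ≥ 2 and let M ≥ 1 be such that the integer interval [1, M] can be partitioned into n − 1 sumfree subsets. Then there exists a sequence A of positive integers of length M with sum σ(A) ≤ n·M such that the set Â of block sums of A can be covered by n − 1 sumfree subsets of ℤ. (This shows L(n) ≥ S(n−1) + 1, where L(n) is the least L such that every sequence of positive integers of length L and average at most n has Schur degree at least n.) -/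
/-- `X` can be partitioned into `n` sumfree subsets. -/
def SFPartition {G : Type*} [AddCommGroup G] (n : ℕ) (X : Set G) : Prop :=
  ∃ C : Fin n → Set G, (∀ i, Sumfree (C i)) ∧
    Pairwise (Function.onFun Disjoint C) ∧ (⋃ i, C i) = X

/-- If `[1, M]` can be partitioned into `n - 1` sumfree subsets, then there is a
sequence `A` of positive integers of length `M` with sum at most `n·M` whose set
of block sums can be covered by `n - 1` sumfree subsets of `ℤ`.
(This shows `L(n) ≥ S(n-1) + 1`.) -/
theorem exists_seq_of_sfPartition (n M : ℕ) (hn : 2 ≤ n) (hM : 1 ≤ M)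
    (h : SFPartition (n - 1) (Set.Icc (1 : ℤ) (M : ℤ))) :
    ∃ A : List ℤ, (∀ a ∈ A, 0 < a) ∧ A.length = M ∧ A.sum ≤ (n : ℤ) * M ∧
      CoveredBySumfree (n - 1) (blockSums A) := by
  obtain ⟨C, hC, -, hU⟩ := h
  refine ⟨List.replicate M 1, ?_, by simp, ?_, C, hC, ?_⟩
  · intro a ha
    simp only [List.mem_replicate] at ha
    omega
  · have : (List.replicate M (1 : ℤ)).sum = M := by simp
    rw [this]
    nlinarith [Int.ofNat_le.mpr hn, Int.ofNat_le.mpr hM]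
  · rw [hU]
    rintro s ⟨B, ⟨hBne, L, R, hLR⟩, rfl⟩
    have hall : ∀ a ∈ B, a = (1 : ℤ) := by
      intro a ha
      have : a ∈ List.replicate M (1 : ℤ) := by
        rw [hLR]; simp [ha]
      exact (List.eq_of_mem_replicate this)
    have hsum : B.sum = (B.length : ℤ) := by
      have := List.sum_eq_card_nsmul B 1 hall
      simpa using this
    have hlen : B.length ≤ M := by
      have := congrArg List.length hLR
      simp at this
      omega
    have hpos : 1 ≤ B.length := List.length_pos_iff.mpr hBne
    rw [hsum]
    constructor <;> [exact_mod_cast hpos; exact_mod_cast hlen]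
end

section
/- Let n ≥ 2 and let L ≥ 1 be a positive integer with the property that for every sequence B of positive integers of length L with sum σ(B) ≤ n·L, the set B̂ of block sums of B cannot be covered by n − 1 sumfree subsets of ℤ. Then the integer interval [1, n·L + 1] cannot be partitioned into n sumfree subsets. (Consequently S(n) ≤ n·L(n).) -/
section ConsecutiveDiffs

variable {G : Type*} [AddCommGroup G]

def consecutiveDiffs (f : ℕ → G) (L : ℕ) : List G :=
  (List.range L).map fun j => f (j + 1) - f j

@[simp]
lemma length_consecutiveDiffs (f : ℕ → G) (L : ℕ) : (consecutiveDiffs f L).length = L := by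
  simp [consecutiveDiffs]

lemma sum_consecutiveDiffs (f : ℕ → G) (L : ℕ) : (consecutiveDiffs f L).sum = f L - f 0 := by
  induction L with
  | zero => simp [consecutiveDiffs]
  | succ L ih =>
    rw [consecutiveDiffs, List.sum_range_succ, ← consecutiveDiffs, ih]
    abel

lemma take_consecutiveDiffs (f : ℕ → G) {m L : ℕ} (hm : m ≤ L) :
    (consecutiveDiffs f L).take m = consecutiveDiffs f m := by
  rw [consecutiveDiffs, ← List.map_take, List.take_range, min_eq_left hm, consecutiveDiffs]

lemma exists_sub_eq_of_mem_blockSums_consecutiveDiffs {f : ℕ → G} {L : ℕ} {s : G}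
    (hs : s ∈ blockSums (consecutiveDiffs f L)) : ∃ p q, p < q ∧ q ≤ L ∧ f q - f p = s := by
  obtain ⟨B, ⟨hB, P, R, hPBR⟩, rfl⟩ := hs
  have hlen : P.length + B.length + R.length = L := by
    simpa [add_assoc] using (congrArg List.length hPBR).symm
  have hB_pos : 0 < B.length := List.length_pos_iff.mpr hB
  have hP : f P.length - f 0 = P.sum := by
    rw [← sum_consecutiveDiffs, ← take_consecutiveDiffs f (by omega : P.length ≤ L), hPBR,
      List.append_assoc, List.take_left]
  have hPB : f (P.length + B.length) - f 0 = P.sum + B.sum := by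
    rw [← sum_consecutiveDiffs, ← take_consecutiveDiffs f (by omega : P.length + B.length ≤ L),
      hPBR, ← List.length_append, List.take_left, List.sum_append]
  exact ⟨P.length, P.length + B.length, by omega, by omega,
    by rw [← sub_sub_sub_cancel_right _ _ (f 0), hP, hPB, add_sub_cancel_left]⟩

end ConsecutiveDiffs

lemma pos_of_mem_consecutiveDiffs {G : Type*} [AddCommGroup G] [PartialOrder G]
    [IsOrderedAddMonoid G] {f : ℕ → G} {L : ℕ} (hf : StrictMonoOn f (Set.Iic L)) {b : G}
    (hb : b ∈ consecutiveDiffs f L) : 0 < b := by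
  obtain ⟨j, hj, rfl⟩ := List.mem_map.mp hb
  have hj : j < L := List.mem_range.mp hj
  exact sub_pos.mpr (hf (Set.mem_Iic.mpr hj.le) (Set.mem_Iic.mpr hj) (Nat.lt_succ_self j))

lemma coveredBySumfree_sub_one_of_subset_iUnion {G : Type*} [AddCommGroup G] {n : ℕ}
    {C : Fin n → Set G} (hC : ∀ i, Sumfree (C i)) (k : Fin n) {Y : Set G} (hY : Y ⊆ ⋃ i, C i)
    (hYk : ∀ y ∈ Y, ∃ a ∈ C k, a + y ∈ C k) : CoveredBySumfree (n - 1) Y := by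
  obtain ⟨m, rfl⟩ := Nat.exists_eq_add_of_lt k.pos
  refine ⟨fun i => C (k.succAbove i), fun i => hC _, fun y hy => ?_⟩
  obtain ⟨j, hj⟩ := Set.mem_iUnion.mp (hY hy)
  have hjk : j ≠ k := by
    rintro rfl
    obtain ⟨a, ha, hay⟩ := hYk y hy
    exact hC j a ha y hj hay
  obtain ⟨i, rfl⟩ := Fin.exists_succAbove_eq hjk
  exact Set.mem_iUnion.mpr ⟨i, hj⟩

lemma Finset.exists_subset_card_eq_succ_of_subset_iUnion {α : Type*} {n L : ℕ}
    {C : Fin n → Set α} {I : Finset α} (hI : (I : Set α) ⊆ ⋃ i, C i) (hcard : n * L < I.card) :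
    ∃ k, ∃ S ⊆ I, (S : Set α) ⊆ C k ∧ S.card = L + 1 := by
  classical
  have hcover : I ⊆ Finset.univ.biUnion fun i => I.filter (· ∈ C i) := fun x hx => by
    obtain ⟨i, hi⟩ := Set.mem_iUnion.mp (hI hx)
    exact Finset.mem_biUnion.mpr ⟨i, Finset.mem_univ _, Finset.mem_filter.mpr ⟨hx, hi⟩⟩
  have hsum : ∑ _i : Fin n, L < ∑ i, (I.filter (· ∈ C i)).card := by
    rw [Finset.sum_const, Finset.card_univ, Fintype.card_fin, smul_eq_mul]
    exact hcard.trans_le ((Finset.card_le_card hcover).trans Finset.card_biUnion_le)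
  obtain ⟨k, -, hk⟩ := Finset.exists_lt_of_sum_lt hsum
  obtain ⟨S, hS, hScard⟩ := Finset.exists_subset_card_eq (Nat.succ_le_of_lt hk)
  exact ⟨k, S, hS.trans (Finset.filter_subset _ _),
    fun x hx => (Finset.mem_filter.mp (hS hx)).2, hScard⟩

lemma Finset.exists_strictMonoOn_Iic_of_card_eq_succ {α : Type*} [LinearOrder α]
    {S : Finset α} {L : ℕ} (h : S.card = L + 1) :
    ∃ f : ℕ → α, StrictMonoOn f (Set.Iic L) ∧ ∀ i, f i ∈ S := by
  refine ⟨fun i => S.orderEmbOfFin h (Fin.ofNat _ i), fun i hi j hj hij => ?_,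
    fun i => S.orderEmbOfFin_mem h _⟩
  have hi : i < L + 1 := Nat.lt_succ_of_le hi
  have hj : j < L + 1 := Nat.lt_succ_of_le hj
  refine (S.orderEmbOfFin h).strictMono (Fin.lt_def.mpr ?_)
  rwa [Fin.val_ofNat, Fin.val_ofNat, Nat.mod_eq_of_lt hi, Nat.mod_eq_of_lt hj]

theorem not_sfPartition_of_L_general (n L : ℕ)
    (h : ∀ B : List ℤ, (∀ b ∈ B, 0 < b) → B.length = L → B.sum ≤ (n : ℤ) * L →
      ¬ CoveredBySumfree (n - 1) (blockSums B)) :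
    ¬ SFPartition n (Set.Icc (1 : ℤ) ((n : ℤ) * L + 1)) := by
  rintro ⟨C, hC, -, hunion⟩
  set I := Finset.Icc (1 : ℤ) (n * L + 1)
  have hIcard : n * L < I.card := by
    rw [Int.card_Icc]
    omega
  obtain ⟨k, S, hSI, hSk, hScard⟩ :=
    Finset.exists_subset_card_eq_succ_of_subset_iUnion (C := C) (by simp [I, hunion]) hIcard
  obtain ⟨f, hf, hfS⟩ := Finset.exists_strictMonoOn_Iic_of_card_eq_succ hScard
  have hfI (i : ℕ) : 1 ≤ f i ∧ f i ≤ n * L + 1 := Finset.mem_Icc.mp (hSI (hfS i))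
  refine h (consecutiveDiffs f L) (fun b => pos_of_mem_consecutiveDiffs hf)
    (length_consecutiveDiffs f L) ?_ (coveredBySumfree_sub_one_of_subset_iUnion hC k ?_ ?_)
  · rw [sum_consecutiveDiffs]
    linarith [(hfI 0).1, (hfI L).2]
  · intro s hs
    obtain ⟨p, q, hpq, hq, rfl⟩ := exists_sub_eq_of_mem_blockSums_consecutiveDiffs hs
    have hlt := hf (Set.mem_Iic.mpr (hpq.le.trans hq)) (Set.mem_Iic.mpr hq) hpq
    rw [hunion]
    constructor <;> linarith [(hfI p).1, (hfI q).2]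
  · intro s hs
    obtain ⟨p, q, -, -, rfl⟩ := exists_sub_eq_of_mem_blockSums_consecutiveDiffs hs
    exact ⟨f p, hSk (hfS p), by rw [add_sub_cancel]; exact hSk (hfS q)⟩

/-- If every sequence `B` of positive integers of length `L` with sum at most
`n·L` has block-sum set not coverable by `n - 1` sumfree subsets of `ℤ`, then
`[1, n·L + 1]` cannot be partitioned into `n` sumfree subsets.
(Consequently `S(n) ≤ n·L(n)`.) -/
theorem not_sfPartition_of_L (n L : ℕ) (hn : 2 ≤ n) (hL : 1 ≤ L)
    (h : ∀ B : List ℤ, (∀ b ∈ B, 0 < b) → B.length = L → B.sum ≤ (n : ℤ) * L →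
      ¬ CoveredBySumfree (n - 1) (blockSums B)) :
    ¬ SFPartition n (Set.Icc (1 : ℤ) ((n : ℤ) * L + 1)) :=
  not_sfPartition_of_L_general n L h
end

section
/- For every integer m ≥ 3, the set B = {1, 2} ∪ [m, m+4] ⊆ ℤ can be partitioned into 3 sumfree subsets but cannot be covered by 2 sumfree subsets; that is, sd(B) = 3. -/
lemma key_no2 (m : ℤ) (hm : 3 ≤ m) (A Bs : Set ℤ) (hA : Sumfree A) (hB : Sumfree Bs)
    (h1 : (1:ℤ) ∈ A) (h2 : (2:ℤ) ∈ Bs)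
    (hcov : ∀ x : ℤ, m ≤ x → x ≤ m + 4 → x ∈ A ∨ x ∈ Bs) : False := by
  have c0 := hcov m (by omega) (by omega)
  have c1 := hcov (m+1) (by omega) (by omega)
  have c2 := hcov (m+2) (by omega) (by omega)
  have c3 := hcov (m+3) (by omega) (by omega)
  have c4 := hcov (m+4) (by omega) (by omega)
  have dA : ∀ a b : ℤ, a + 1 = b → a ∈ A → b ∉ A := by
    intro a b hab ha hb
    have := hA a ha 1 h1
    rw [hab] at this
    exact this hb
  have dB : ∀ a b : ℤ, a + 2 = b → a ∈ Bs → b ∉ Bs := by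
    intro a b hab ha hb
    have := hB a ha 2 h2
    rw [hab] at this
    exact this hb
  have d01 : m ∈ A → m + 1 ∉ A := dA m (m+1) (by ring)
  have d12 : m + 1 ∈ A → m + 2 ∉ A := dA (m+1) (m+2) (by ring)
  have d23 : m + 2 ∈ A → m + 3 ∉ A := dA (m+2) (m+3) (by ring)
  have d34 : m + 3 ∈ A → m + 4 ∉ A := dA (m+3) (m+4) (by ring)
  have e02 : m ∈ Bs → m + 2 ∉ Bs := dB m (m+2) (by ring)
  have e13 : m + 1 ∈ Bs → m + 3 ∉ Bs := dB (m+1) (m+3) (by ring)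
  have e24 : m + 2 ∈ Bs → m + 4 ∉ Bs := dB (m+2) (m+4) (by ring)
  rcases c0 with h0|h0 <;> rcases c1 with g1|g1 <;> rcases c2 with g2|g2 <;>
    rcases c3 with g3|g3 <;> rcases c4 with g4|g4 <;>
    first
    | exact d01 h0 g1
    | exact d12 g1 g2
    | exact d23 g2 g3
    | exact d34 g3 g4
    | exact e02 h0 g2
    | exact e13 g1 g3
    | exact e24 g2 g4

/-- For every integer `m ≥ 3`, the set `B = {1, 2} ∪ [m, m+4]` can be
partitioned into `3` sumfree subsets but cannot be covered by `2` sumfree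
subsets; that is, `sd(B) = 3`. -/
theorem schur_degree_pair_union_interval (m : ℤ) (hm : 3 ≤ m) :
    SFPartition 3 (({1, 2} : Set ℤ) ∪ Set.Icc m (m + 4)) ∧
      ¬ CoveredBySumfree 2 (({1, 2} : Set ℤ) ∪ Set.Icc m (m + 4)) := by
  constructor
  · refine ⟨![({1, m, m + 2} : Set ℤ), {2, m + 3}, {m + 1, m + 4}], ?_, ?_, ?_⟩
    · intro i
      fin_cases i <;>
      · intro x hx y hy h
        simp at hx hy h
        omega
    · intro i j hij
      fin_cases i <;> fin_cases j <;> simp only [Function.onFun] <;>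
        first
        | exact absurd rfl hij
        | · rw [Set.disjoint_left]
            intro a ha hb
            simp at ha hb
            omega
    · ext x
      simp only [Set.mem_iUnion, Set.mem_union, Set.mem_Icc, Set.mem_insert_iff,
        Set.mem_singleton_iff]
      constructor
      · rintro ⟨i, hi⟩
        fin_cases i <;> simp at hi <;> omega
      · intro h
        by_cases h0 : x = 1 ∨ x = m ∨ x = m + 2
        · exact ⟨0, by simpa using h0⟩
        by_cases h1 : x = 2 ∨ x = m + 3
        · exact ⟨1, by simpa using h1⟩
        · refine ⟨2, ?_⟩
          have : x = m + 1 ∨ x = m + 4 := by omega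
          simpa using this
  · rintro ⟨C, hC, hcov⟩
    have h1 : (1:ℤ) ∈ ⋃ i, C i := hcov (by simp)
    have h2 : (2:ℤ) ∈ ⋃ i, C i := hcov (by simp)
    simp only [Set.mem_iUnion] at h1 h2
    obtain ⟨i, hi⟩ := h1
    obtain ⟨j, hj⟩ := h2
    have hij : i ≠ j := by
      rintro rfl
      exact hC i 1 hi 1 hi (by norm_num; exact hj)
    have hcov' : ∀ x : ℤ, m ≤ x → x ≤ m + 4 → x ∈ C i ∨ x ∈ C j := by
      intro x hx hx'
      have hx2 : x ∈ ⋃ k, C k := hcov (Or.inr ⟨hx, hx'⟩)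
      simp only [Set.mem_iUnion] at hx2
      obtain ⟨k, hk⟩ := hx2
      have : k = i ∨ k = j := by
        fin_cases i <;> fin_cases j <;> fin_cases k <;> simp_all
      rcases this with rfl | rfl
      · exact Or.inl hk
      · exact Or.inr hk
    exact key_no2 m hm (C i) (C j) (hC i) (hC j) hi hj hcov'
end

section
/- For every integer x ≥ 8, the set [1, 6] ∪ [x, x+13] ⊆ ℤ can be partitioned into 3 sumfree subsets but cannot be covered by 2 sumfree subsets; that is, sd([1,6] ∪ [x, x+13]) = 3. (A valid partition is C₁ = {1, 6, x, x+3, x+7, x+10}, C₂ = {2, 5, x+1, x+2, x+8, x+9}, C₃ = {3, 4, x+4, x+5, x+6, x+11, x+12, x+13}.) -/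
lemma no_two_cover (S T : Set ℤ) (hS : Sumfree S) (hT : Sumfree T)
    (h : ∀ n : ℤ, 1 ≤ n → n ≤ 5 → n ∈ S ∪ T) (h1 : (1:ℤ) ∈ S) : False := by
  have h2 : (2:ℤ) ∈ T := by
    have hns := hS 1 h1 1 h1
    norm_num at hns
    rcases h 2 (by norm_num) (by norm_num) with h' | h'
    · exact absurd h' hns
    · exact h'
  have h4 : (4:ℤ) ∈ S := by
    have hnt := hT 2 h2 2 h2
    norm_num at hnt
    rcases h 4 (by norm_num) (by norm_num) with h' | h'
    · exact h'
    · exact absurd h' hnt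
  have h5 : (5:ℤ) ∈ T := by
    have hns := hS 1 h1 4 h4
    norm_num at hns
    rcases h 5 (by norm_num) (by norm_num) with h' | h'
    · exact absurd h' hns
    · exact h'
  have h3 : (3:ℤ) ∈ T := by
    rcases h 3 (by norm_num) (by norm_num) with h' | h'
    · have := hS 1 h1 3 h'
      norm_num at this
      exact absurd h4 this
    · exact h'
  have := hT 2 h2 3 h3
  norm_num at this
  exact this h5

lemma build_part (X S0 S1 S2 : Set ℤ) (h0 : Sumfree S0) (h1 : Sumfree S1) (h2 : Sumfree S2)
    (d01 : Disjoint S0 S1) (d02 : Disjoint S0 S2) (d12 : Disjoint S1 S2)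
    (hu : S0 ∪ S1 ∪ S2 = X) : SFPartition 3 X := by
  refine ⟨![S0, S1, S2], ?_, ?_, ?_⟩
  · intro i
    fin_cases i <;> simpa
  · intro i j hij
    fin_cases i <;> fin_cases j <;>
      simp_all [Function.onFun] <;>
      first
        | exact d01 | exact d01.symm | exact d02 | exact d02.symm
        | exact d12 | exact d12.symm
  · rw [← hu]
    ext a
    simp [Fin.exists_fin_succ, Set.mem_union, or_assoc]

/-- For every integer `x ≥ 8`, the set `[1, 6] ∪ [x, x+13]` can be partitioned
into `3` sumfree subsets but cannot be covered by `2` sumfree subsets; that is,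
`sd([1,6] ∪ [x, x+13]) = 3`. -/
theorem schur_degree_interval_union_interval (x : ℤ) (hx : 8 ≤ x) :
    SFPartition 3 (Set.Icc (1 : ℤ) 6 ∪ Set.Icc x (x + 13)) ∧
      ¬ CoveredBySumfree 2 (Set.Icc (1 : ℤ) 6 ∪ Set.Icc x (x + 13)) := by
  constructor
  · rcases lt_or_ge x 14 with hlt | hge
    · interval_cases x
      · exact build_part _ {1,6,9,13,16,20} {2,5,8,11,14,15,18,21} {3,4,10,12,17,19}
          (by intro a ha b hb hab; simp only [Set.mem_insert_iff, Set.mem_singleton_iff] at ha hb hab; omega)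
          (by intro a ha b hb hab; simp only [Set.mem_insert_iff, Set.mem_singleton_iff] at ha hb hab; omega)
          (by intro a ha b hb hab; simp only [Set.mem_insert_iff, Set.mem_singleton_iff] at ha hb hab; omega)
          (by rw [Set.disjoint_left]; intro a ha hb; simp only [Set.mem_insert_iff, Set.mem_singleton_iff] at ha hb; omega)
          (by rw [Set.disjoint_left]; intro a ha hb; simp only [Set.mem_insert_iff, Set.mem_singleton_iff] at ha hb; omega)
          (by rw [Set.disjoint_left]; intro a ha hb; simp only [Set.mem_insert_iff, Set.mem_singleton_iff] at ha hb; omega)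
          (by ext a; simp only [Set.mem_union, Set.mem_insert_iff, Set.mem_singleton_iff, Set.mem_Icc]; omega)
      · exact build_part _ {1,6,9,13,16,20} {2,5,14,15,18,21,22} {3,4,10,11,12,17,19}
          (by intro a ha b hb hab; simp only [Set.mem_insert_iff, Set.mem_singleton_iff] at ha hb hab; omega)
          (by intro a ha b hb hab; simp only [Set.mem_insert_iff, Set.mem_singleton_iff] at ha hb hab; omega)
          (by intro a ha b hb hab; simp only [Set.mem_insert_iff, Set.mem_singleton_iff] at ha hb hab; omega)
          (by rw [Set.disjoint_left]; intro a ha hb; simp only [Set.mem_insert_iff, Set.mem_singleton_iff] at ha hb; omega)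
          (by rw [Set.disjoint_left]; intro a ha hb; simp only [Set.mem_insert_iff, Set.mem_singleton_iff] at ha hb; omega)
          (by rw [Set.disjoint_left]; intro a ha hb; simp only [Set.mem_insert_iff, Set.mem_singleton_iff] at ha hb; omega)
          (by ext a; simp only [Set.mem_union, Set.mem_insert_iff, Set.mem_singleton_iff, Set.mem_Icc]; omega)
      · exact build_part _ {1,6,10,14,17,19,21} {2,5,12,15,16,22,23} {3,4,11,13,18,20}
          (by intro a ha b hb hab; simp only [Set.mem_insert_iff, Set.mem_singleton_iff] at ha hb hab; omega)
          (by intro a ha b hb hab; simp only [Set.mem_insert_iff, Set.mem_singleton_iff] at ha hb hab; omega)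
          (by intro a ha b hb hab; simp only [Set.mem_insert_iff, Set.mem_singleton_iff] at ha hb hab; omega)
          (by rw [Set.disjoint_left]; intro a ha hb; simp only [Set.mem_insert_iff, Set.mem_singleton_iff] at ha hb; omega)
          (by rw [Set.disjoint_left]; intro a ha hb; simp only [Set.mem_insert_iff, Set.mem_singleton_iff] at ha hb; omega)
          (by rw [Set.disjoint_left]; intro a ha hb; simp only [Set.mem_insert_iff, Set.mem_singleton_iff] at ha hb; omega)
          (by ext a; simp only [Set.mem_union, Set.mem_insert_iff, Set.mem_singleton_iff, Set.mem_Icc]; omega)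
      · exact build_part _ {1,6,11,14,16,18,21,23} {2,5,12,13,19,20} {3,4,15,17,22,24}
          (by intro a ha b hb hab; simp only [Set.mem_insert_iff, Set.mem_singleton_iff] at ha hb hab; omega)
          (by intro a ha b hb hab; simp only [Set.mem_insert_iff, Set.mem_singleton_iff] at ha hb hab; omega)
          (by intro a ha b hb hab; simp only [Set.mem_insert_iff, Set.mem_singleton_iff] at ha hb hab; omega)
          (by rw [Set.disjoint_left]; intro a ha hb; simp only [Set.mem_insert_iff, Set.mem_singleton_iff] at ha hb; omega)
          (by rw [Set.disjoint_left]; intro a ha hb; simp only [Set.mem_insert_iff, Set.mem_singleton_iff] at ha hb; omega)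
          (by rw [Set.disjoint_left]; intro a ha hb; simp only [Set.mem_insert_iff, Set.mem_singleton_iff] at ha hb; omega)
          (by ext a; simp only [Set.mem_union, Set.mem_insert_iff, Set.mem_singleton_iff, Set.mem_Icc]; omega)
      · exact build_part _ {1,6,13,15,17,20,22,24} {2,5,12,18,19,25} {3,4,14,16,21,23}
          (by intro a ha b hb hab; simp only [Set.mem_insert_iff, Set.mem_singleton_iff] at ha hb hab; omega)
          (by intro a ha b hb hab; simp only [Set.mem_insert_iff, Set.mem_singleton_iff] at ha hb hab; omega)
          (by intro a ha b hb hab; simp only [Set.mem_insert_iff, Set.mem_singleton_iff] at ha hb hab; omega)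
          (by rw [Set.disjoint_left]; intro a ha hb; simp only [Set.mem_insert_iff, Set.mem_singleton_iff] at ha hb; omega)
          (by rw [Set.disjoint_left]; intro a ha hb; simp only [Set.mem_insert_iff, Set.mem_singleton_iff] at ha hb; omega)
          (by rw [Set.disjoint_left]; intro a ha hb; simp only [Set.mem_insert_iff, Set.mem_singleton_iff] at ha hb; omega)
          (by ext a; simp only [Set.mem_union, Set.mem_insert_iff, Set.mem_singleton_iff, Set.mem_Icc]; omega)
      · exact build_part _ {1,6,13,16,18,20,23,25} {2,5,14,15,21,22} {3,4,17,19,24,26}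
          (by intro a ha b hb hab; simp only [Set.mem_insert_iff, Set.mem_singleton_iff] at ha hb hab; omega)
          (by intro a ha b hb hab; simp only [Set.mem_insert_iff, Set.mem_singleton_iff] at ha hb hab; omega)
          (by intro a ha b hb hab; simp only [Set.mem_insert_iff, Set.mem_singleton_iff] at ha hb hab; omega)
          (by rw [Set.disjoint_left]; intro a ha hb; simp only [Set.mem_insert_iff, Set.mem_singleton_iff] at ha hb; omega)
          (by rw [Set.disjoint_left]; intro a ha hb; simp only [Set.mem_insert_iff, Set.mem_singleton_iff] at ha hb; omega)
          (by rw [Set.disjoint_left]; intro a ha hb; simp only [Set.mem_insert_iff, Set.mem_singleton_iff] at ha hb; omega)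
          (by ext a; simp only [Set.mem_union, Set.mem_insert_iff, Set.mem_singleton_iff, Set.mem_Icc]; omega)
    · exact build_part _ {1,6,x,x+3,x+7,x+10} {2,5,x+1,x+2,x+8,x+9} {3,4,x+4,x+5,x+6,x+11,x+12,x+13}
        (by intro a ha b hb hab; simp only [Set.mem_insert_iff, Set.mem_singleton_iff] at ha hb hab; omega)
        (by intro a ha b hb hab; simp only [Set.mem_insert_iff, Set.mem_singleton_iff] at ha hb hab; omega)
        (by intro a ha b hb hab; simp only [Set.mem_insert_iff, Set.mem_singleton_iff] at ha hb hab; omega)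
        (by rw [Set.disjoint_left]; intro a ha hb; simp only [Set.mem_insert_iff, Set.mem_singleton_iff] at ha hb; omega)
        (by rw [Set.disjoint_left]; intro a ha hb; simp only [Set.mem_insert_iff, Set.mem_singleton_iff] at ha hb; omega)
        (by rw [Set.disjoint_left]; intro a ha hb; simp only [Set.mem_insert_iff, Set.mem_singleton_iff] at ha hb; omega)
        (by ext a; simp only [Set.mem_union, Set.mem_insert_iff, Set.mem_singleton_iff, Set.mem_Icc]; omega)
  · rintro ⟨C, hsf, hsub⟩
    have hmem : ∀ n : ℤ, 1 ≤ n → n ≤ 5 → n ∈ C 0 ∪ C 1 := by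
      intro n h1 h5
      have : n ∈ ⋃ i, C i := hsub (Or.inl ⟨h1, by omega⟩)
      rw [Set.mem_iUnion] at this
      obtain ⟨i, hi⟩ := this
      fin_cases i
      · exact Or.inl hi
      · exact Or.inr hi
    rcases hmem 1 le_rfl (by norm_num) with h1 | h1
    · exact no_two_cover (C 0) (C 1) (hsf 0) (hsf 1) hmem h1
    · exact no_two_cover (C 1) (C 0) (hsf 1) (hsf 0)
        (fun n a b => (hmem n a b).symm) h1
end

section
/- Let N ≥ 1 and for 1 ≤ i < j ≤ N + 1 write b(i, j) = 3^{i−1} + 3^{i} + ⋯ + 3^{j−2} (the block sums of the sequence A = (1, 3, 3², …, 3^{N−1})). If indices 1 ≤ i₁ < j₁ ≤ N+1, 1 ≤ i₂ < j₂ ≤ N+1, 1 ≤ i₃ < j₃ ≤ N+1 satisfy b(i₁, j₁) + b(i₂, j₂) = b(i₃, j₃) and i₁ ≤ i₂, then i₁ = i₃, j₁ = i₂, and j₂ = j₃. -/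
/-!
Work in any base `q ≥ 3`, with `b(i, j) = q^i + ⋯ + q^(j-1)`. Dividing by `q` reduces to the case
`i₁ = 0`. The lowest base-`q` digit of `b(i, j)` is `1` if `i = 0` and `0` otherwise, so comparing
lowest digits in `b(0, j₁) + b(i₂, j₂) = b(i₃, j₃)` gives `i₃ = 0` and `i₂ ≠ 0` (the digit `2` is
impossible as `q ≥ 3`). Then `b(i₂, j₂) = b(0, j₃) - b(0, j₁) = b(j₁, j₃)`, and a block sum
determines its endpoints.
-/

open Finset

/-- Indices start at `0`: `blockSum 3 (i - 1) (j - 1)` is the `b(i, j)` of the statement. -/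
def blockSum (q i j : ℕ) : ℕ := ∑ k ∈ Ico i j, q ^ k

namespace blockSum

variable {q i j k : ℕ}

theorem add_consecutive (hij : i ≤ j) (hjk : j ≤ k) :
    blockSum q i j + blockSum q j k = blockSum q i k :=
  sum_Ico_consecutive _ hij hjk

theorem pos (hq : 0 < q) (hij : i < j) : 0 < blockSum q i j :=
  sum_pos (fun k _ => pow_pos hq k) (nonempty_Ico.2 hij)

theorem lt_right_of_lt (hq : 0 < q) (hij : i ≤ j) (hjk : j < k) : blockSum q i j < blockSum q i k := by
  rw [← add_consecutive hij hjk.le]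
  exact Nat.lt_add_of_pos_right (pos hq hjk)

theorem succ_succ (q i j : ℕ) : blockSum q (i + 1) (j + 1) = q * blockSum q i j := by
  simp only [blockSum, ← sum_Ico_add', mul_sum, pow_succ']

theorem succ_mod (q i j : ℕ) : blockSum q (i + 1) j % q = 0 :=
  Nat.mod_eq_zero_of_dvd <| dvd_sum fun k hk =>
    dvd_pow_self q (by have := (mem_Ico.1 hk).1; omega)

theorem zero_mod (hq : 2 ≤ q) (hj : 0 < j) : blockSum q 0 j % q = 1 := by
  have h1 : blockSum q 1 j % q = 0 := succ_mod q 0 j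
  rw [← add_consecutive zero_le_one hj, Nat.add_mod, h1]
  simp [blockSum, Nat.mod_eq_of_lt (show 1 < q by omega)]

theorem mod_le_one (hq : 2 ≤ q) (i j : ℕ) : blockSum q i j % q ≤ 1 := by
  rcases i with _ | i
  · rcases j with _ | j
    · simp [blockSum]
    · exact (zero_mod hq j.succ_pos).le
  · simp [succ_mod]

theorem eq_zero_of_mod_ne_zero (h : blockSum q i j % q ≠ 0) : i = 0 := by
  cases i with
  | zero => rfl
  | succ i => exact absurd (succ_mod q i j) h

theorem eq_and_eq_of_eq (hq : 2 ≤ q) {i' j' : ℕ} (hij : i < j) (hij' : i' < j')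
    (h : blockSum q i j = blockSum q i' j') : i = i' ∧ j = j' := by
  induction i generalizing i' j j' with
  | zero =>
    have hi' : i' = 0 := eq_zero_of_mod_ne_zero (by rw [← h, zero_mod hq hij]; omega)
    subst hi'
    refine ⟨rfl, ?_⟩
    by_contra hne
    rcases Nat.lt_or_gt_of_ne hne with hlt | hlt
    · exact (lt_right_of_lt (by omega) (Nat.zero_le _) hlt).ne h
    · exact (lt_right_of_lt (by omega) (Nat.zero_le _) hlt).ne' h
  | succ i ih =>
    have hi' : i' ≠ 0 := by
      rintro rfl
      have := zero_mod hq hij'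
      rw [← h, succ_mod] at this
      omega
    obtain ⟨i', rfl⟩ := Nat.exists_eq_add_one.2 (Nat.pos_of_ne_zero hi')
    obtain ⟨j, rfl⟩ := Nat.exists_eq_add_one.2 (show 0 < j by omega)
    obtain ⟨j', rfl⟩ := Nat.exists_eq_add_one.2 (show 0 < j' by omega)
    rw [succ_succ, succ_succ, Nat.mul_left_cancel_iff (by omega)] at h
    obtain ⟨rfl, rfl⟩ := ih (by omega) (by omega) h
    exact ⟨rfl, rfl⟩

theorem eq_and_eq_and_eq_of_add_eq (hq : 3 ≤ q) {i₁ j₁ i₂ j₂ i₃ j₃ : ℕ} (h₁ : i₁ < j₁)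
    (h₂ : i₂ < j₂) (h₃ : i₃ < j₃) (hle : i₁ ≤ i₂)
    (h : blockSum q i₁ j₁ + blockSum q i₂ j₂ = blockSum q i₃ j₃) :
    i₁ = i₃ ∧ j₁ = i₂ ∧ j₂ = j₃ := by
  induction i₁ generalizing i₂ i₃ j₁ j₂ j₃ with
  | zero =>
    have hx := mod_le_one (q := q) (by omega) i₂ j₂
    have hmod : blockSum q i₃ j₃ % q = 1 + blockSum q i₂ j₂ % q := by
      rw [← h, Nat.add_mod, zero_mod (by omega) h₁, Nat.mod_eq_of_lt (by omega)]
    obtain rfl : i₃ = 0 := eq_zero_of_mod_ne_zero (by rw [hmod]; omega)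
    rw [zero_mod (by omega) h₃] at hmod
    have hi₂ : i₂ ≠ 0 := by
      rintro rfl
      rw [zero_mod (by omega) h₂] at hmod
      omega
    have hj₁₃ : j₁ < j₃ := by
      by_contra! hle'
      have := add_consecutive (q := q) (Nat.zero_le j₃) hle'
      have := pos (q := q) (by omega) h₂
      omega
    rw [← add_consecutive (Nat.zero_le j₁) hj₁₃.le, Nat.add_left_cancel_iff] at h
    obtain ⟨rfl, rfl⟩ := eq_and_eq_of_eq (by omega) h₂ hj₁₃ h
    exact ⟨rfl, rfl, rfl⟩
  | succ i₁ ih =>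
    obtain ⟨i₂, rfl⟩ := Nat.exists_eq_add_one.2 (show 0 < i₂ by omega)
    have hi₃ : i₃ ≠ 0 := by
      rintro rfl
      have := zero_mod (q := q) (by omega) h₃
      rw [← h, Nat.add_mod, succ_mod, succ_mod] at this
      simp at this
    obtain ⟨i₃, rfl⟩ := Nat.exists_eq_add_one.2 (Nat.pos_of_ne_zero hi₃)
    obtain ⟨j₁, rfl⟩ := Nat.exists_eq_add_one.2 (show 0 < j₁ by omega)
    obtain ⟨j₂, rfl⟩ := Nat.exists_eq_add_one.2 (show 0 < j₂ by omega)
    obtain ⟨j₃, rfl⟩ := Nat.exists_eq_add_one.2 (show 0 < j₃ by omega)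
    rw [succ_succ, succ_succ, succ_succ, ← mul_add, Nat.mul_left_cancel_iff (by omega)] at h
    obtain ⟨rfl, rfl, rfl⟩ := ih (by omega) (by omega) (by omega) (by omega) h
    exact ⟨rfl, rfl, rfl⟩

theorem cast_eq_sum_Ico_pow_pred {i j : ℕ} (hi : 1 ≤ i) (hij : i ≤ j) :
    (blockSum q (i - 1) (j - 1) : ℤ) = ∑ k ∈ Ico i j, (q : ℤ) ^ (k - 1) := by
  obtain ⟨i, rfl⟩ := Nat.exists_eq_add_of_le' hi
  obtain ⟨j, rfl⟩ := Nat.exists_eq_add_of_le' (hi.trans hij)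
  simp [blockSum, ← sum_Ico_add']

end blockSum

theorem powers_of_three_block_sum_relation_general
    (i₁ j₁ i₂ j₂ i₃ j₃ : ℕ)
    (hi₁ : 1 ≤ i₁) (hij₁ : i₁ < j₁)
    (hi₂ : 1 ≤ i₂) (hij₂ : i₂ < j₂)
    (hi₃ : 1 ≤ i₃) (hij₃ : i₃ < j₃)
    (hsum : (∑ k ∈ Finset.Ico i₁ j₁, (3 : ℤ) ^ (k - 1)) +
        (∑ k ∈ Finset.Ico i₂ j₂, (3 : ℤ) ^ (k - 1)) =
      ∑ k ∈ Finset.Ico i₃ j₃, (3 : ℤ) ^ (k - 1))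
    (hle : i₁ ≤ i₂) :
    i₁ = i₃ ∧ j₁ = i₂ ∧ j₂ = j₃ := by
  rw [← Nat.cast_ofNat, ← blockSum.cast_eq_sum_Ico_pow_pred hi₁ hij₁.le,
    ← blockSum.cast_eq_sum_Ico_pow_pred hi₂ hij₂.le,
    ← blockSum.cast_eq_sum_Ico_pow_pred hi₃ hij₃.le] at hsum
  have := blockSum.eq_and_eq_and_eq_of_add_eq (i₁ := i₁ - 1) (i₂ := i₂ - 1) (i₃ := i₃ - 1)
    (j₁ := j₁ - 1) (j₂ := j₂ - 1) (j₃ := j₃ - 1) le_rfl (by omega) (by omega) (by omega)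
    (by omega) (by exact_mod_cast hsum)
  omega

/-- For the sequence `A = (1, 3, 3², …, 3^{N-1})`, with block sums
`b(i, j) = 3^{i-1} + ⋯ + 3^{j-2}` for `1 ≤ i < j ≤ N+1`: if
`b(i₁, j₁) + b(i₂, j₂) = b(i₃, j₃)` and `i₁ ≤ i₂`, then
`i₁ = i₃`, `j₁ = i₂`, and `j₂ = j₃`. -/
theorem powers_of_three_block_sum_relation (N : ℕ) (hN : 1 ≤ N)
    (i₁ j₁ i₂ j₂ i₃ j₃ : ℕ)
    (hi₁ : 1 ≤ i₁) (hij₁ : i₁ < j₁) (hj₁ : j₁ ≤ N + 1)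
    (hi₂ : 1 ≤ i₂) (hij₂ : i₂ < j₂) (hj₂ : j₂ ≤ N + 1)
    (hi₃ : 1 ≤ i₃) (hij₃ : i₃ < j₃) (hj₃ : j₃ ≤ N + 1)
    (hsum : (∑ k ∈ Finset.Ico i₁ j₁, (3 : ℤ) ^ (k - 1)) +
        (∑ k ∈ Finset.Ico i₂ j₂, (3 : ℤ) ^ (k - 1)) =
      ∑ k ∈ Finset.Ico i₃ j₃, (3 : ℤ) ^ (k - 1))
    (hle : i₁ ≤ i₂) :
    i₁ = i₃ ∧ j₁ = i₂ ∧ j₂ = j₃ :=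
  powers_of_three_block_sum_relation_general i₁ j₁ i₂ j₂ i₃ j₃ hi₁ hij₁ hi₂ hij₂ hi₃ hij₃ hsum hle
end

section
/- Let N ≥ 1, n ≥ 1, and let A = (1, 3, 3², …, 3^{N−1}) in ℤ. If there exists an n-coloring of the edges of the complete graph on vertex set {1, …, N+1} with no monochromatic triangle, then the set Â of block sums of A can be covered by n sumfree subsets of ℤ (i.e. sd(Â) ≤ n), even though A is not linearly independent over ℤ. -/
/-!
The block sums of `(1, 3, …, 3^{N-1})` are the numbers `∑_{i ≤ t < j} 3^t`, whose base-3 digits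
are the indicator of an interval `[i, j)`; colour such a number by the edge `{i+1, j+1}`.
Adding two of them produces no carries, so by uniqueness of base-3 digits a sum of two block
sums is again a block sum only when the two intervals are adjacent, `[i, j) ∪ [j, l) = [i, l)`.
Then the three edges `{i+1, j+1}`, `{j+1, l+1}`, `{i+1, l+1}` form a triangle, which is not
monochromatic, so every colour class is sumfree.
-/

open Finset

theorem Nat.eq_of_sum_range_mul_pow_eq {b M : ℕ} {d e : ℕ → ℕ} (hd : ∀ t, d t < b)
    (he : ∀ t, e t < b) (h : ∑ t ∈ range M, d t * b ^ t = ∑ t ∈ range M, e t * b ^ t) :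
    ∀ t < M, d t = e t := by
  induction M generalizing d e with
  | zero => simp
  | succ M ih =>
    simp only [sum_range_succ', pow_succ', mul_left_comm _ b, ← mul_sum, pow_zero, mul_one] at h
    have h0 : d 0 = e 0 := by
      simpa [Nat.mul_add_mod, Nat.mod_eq_of_lt (hd 0), Nat.mod_eq_of_lt (he 0)]
        using congrArg (· % b) h
    rw [h0, add_left_inj, Nat.mul_right_inj ((Nat.zero_le _).trans_lt (hd 0)).ne'] at h
    rintro (_ | t) ht
    · exact h0
    · exact ih (fun t => hd (t + 1)) (fun t => he (t + 1)) h t (by omega)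

theorem disjoint_and_union_eq_of_sum_pow_add_sum_pow {b : ℕ} (hb : 3 ≤ b) {S T U : Finset ℕ}
    (h : ∑ t ∈ S, b ^ t + ∑ t ∈ T, b ^ t = ∑ t ∈ U, b ^ t) : Disjoint S T ∧ S ∪ T = U := by
  obtain ⟨M, hM⟩ := (S ∪ T ∪ U).exists_nat_subset_range
  obtain ⟨⟨hS, hT⟩, hU⟩ := by simpa only [union_subset_iff] using hM
  have hsum {X : Finset ℕ} (hX : X ⊆ range M) :
      ∑ t ∈ X, b ^ t = ∑ t ∈ range M, (if t ∈ X then 1 else 0) * b ^ t := by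
    simp only [boole_mul, sum_ite_mem, inter_eq_right.2 hX]
  have hdigits (t : ℕ) : (if t ∈ S then 1 else 0) + (if t ∈ T then 1 else 0)
      = if t ∈ U then 1 else 0 := by
    by_cases ht : t < M
    · refine Nat.eq_of_sum_range_mul_pow_eq (b := b)
        (d := fun t => (if t ∈ S then 1 else 0) + (if t ∈ T then 1 else 0))
        (e := fun t => if t ∈ U then 1 else 0)
        (fun t => by split_ifs <;> omega) (fun t => by split_ifs <;> omega) ?_ t ht
      simpa only [add_mul, sum_add_distrib, ← hsum hS, ← hsum hT, ← hsum hU]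
    · have hout (X : Finset ℕ) (hX : X ⊆ range M) : t ∉ X :=
        fun hmem => ht (mem_range.1 (hX hmem))
      simp [hout S hS, hout T hT, hout U hU]
  refine ⟨disjoint_left.2 fun t hS hT => ?_, ext fun t => ?_⟩
  · have := hdigits t
    simp only [hS, hT, if_true] at this
    split_ifs at this
    omega
  · have := hdigits t
    rw [mem_union]
    split_ifs at this <;> first | tauto | omega

theorem Finset.Ico_adjacent_of_union_eq_Ico {i j k l p q : ℕ} (hij : i < j) (hkl : k < l)
    (hdisj : Disjoint (Ico i j) (Ico k l)) (hunion : Ico i j ∪ Ico k l = Ico p q) :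
    (j = k ∧ p = i ∧ q = l) ∨ (l = i ∧ p = k ∧ q = j) := by
  have hmem := fun t => Finset.ext_iff.1 hunion t
  have hd := fun t (ht : t ∈ Ico i j) => Finset.disjoint_left.1 hdisj ht
  simp only [mem_union, mem_Ico] at hmem hd
  have := hmem i; have := hmem j; have := hmem k; have := hmem l; have := hmem p
  have := hmem (j - 1); have := hmem (l - 1); have := hmem (q - 1)
  have := hd i; have := hd k
  omega

theorem Ico_adjacent_of_sum_pow_add_sum_pow {b : ℕ} (hb : 3 ≤ b) {i j k l p q : ℕ}
    (hij : i < j) (hkl : k < l)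
    (h : ∑ t ∈ Ico i j, (b : ℤ) ^ t + ∑ t ∈ Ico k l, (b : ℤ) ^ t = ∑ t ∈ Ico p q, (b : ℤ) ^ t) :
    (j = k ∧ p = i ∧ q = l) ∨ (l = i ∧ p = k ∧ q = j) :=
  have ⟨hdisj, hunion⟩ := disjoint_and_union_eq_of_sum_pow_add_sum_pow hb (by exact_mod_cast h)
  Ico_adjacent_of_union_eq_Ico hij hkl hdisj hunion

theorem List.sum_map_range' {M : Type*} [AddCommMonoid M] (f : ℕ → M) (a m : ℕ) :
    ((List.range' a m).map f).sum = ∑ t ∈ Finset.Ico a (a + m), f t := by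
  rw [sum_Ico_eq_sum_range, Nat.add_sub_cancel_left, List.range'_eq_map_range, List.map_map]
  rfl

theorem IsBlock.exists_sum_eq_sum_Ico {M : Type*} [AddCommMonoid M] {f : ℕ → M} {N : ℕ}
    {B : List M} (hB : IsBlock B (List.ofFn fun k : Fin N => f k)) :
    ∃ i j, i < j ∧ j ≤ N ∧ B.sum = ∑ t ∈ Ico i j, f t := by
  obtain ⟨hne, L, R, hsplit⟩ := hB
  have hlen : N = L.length + B.length + R.length := by
    have := congrArg List.length hsplit
    simp only [List.length_ofFn, List.length_append] at this
    omega
  have hrange : List.ofFn (fun k : Fin N => f k) = (List.range N).map f := by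
    apply List.ext_getElem <;> simp
  rw [hrange, List.range_eq_range', hlen, ← List.range'_append, ← List.range'_append] at hsplit
  simp only [List.map_append, zero_add, one_mul] at hsplit
  have hB := (List.append_inj (List.append_inj hsplit.symm (by simp)).1 (by simp)).2
  refine ⟨L.length, L.length + B.length, by simp [List.length_pos_iff.2 hne], by omega, ?_⟩
  rw [← List.sum_map_range', ← hB]

theorem coveredBySumfree_powers_of_three_general (N n : ℕ)
    (hχ : ∃ χ : ℕ → ℕ → Fin n, ∀ i j k : ℕ,
      1 ≤ i → i < j → j < k → k ≤ N + 1 → ¬(χ i j = χ j k ∧ χ i j = χ i k)) :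
    CoveredBySumfree n (blockSums (List.ofFn fun k : Fin N => (3 : ℤ) ^ (k : ℕ))) := by
  obtain ⟨χ, hχ⟩ := hχ
  refine ⟨fun c => {s | ∃ i j, i < j ∧ j ≤ N ∧ s = ∑ t ∈ Ico i j, (3 : ℤ) ^ t ∧
    χ (i + 1) (j + 1) = c}, fun c => ?_, ?_⟩
  · rintro _ ⟨i, j, hij, hj, rfl, hcx⟩ _ ⟨k, l, hkl, hl, rfl, hcy⟩ ⟨p, q, -, hq, hsum, hcz⟩
    rcases Ico_adjacent_of_sum_pow_add_sum_pow (b := 3) le_rfl hij hkl (by exact_mod_cast hsum)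
      with ⟨hjk, hpi, hql⟩ | ⟨hli, hpk, hqj⟩
    · rw [← hjk] at hcy
      rw [hpi, hql] at hcz
      exact hχ (i + 1) (j + 1) (l + 1) (by omega) (by omega) (by omega) (by omega)
        ⟨hcx.trans hcy.symm, hcx.trans hcz.symm⟩
    · rw [hli] at hcy
      rw [hpk, hqj] at hcz
      exact hχ (k + 1) (i + 1) (j + 1) (by omega) (by omega) (by omega) (by omega)
        ⟨hcy.trans hcx.symm, hcy.trans hcz.symm⟩
  · rintro _ ⟨B, hB, rfl⟩
    obtain ⟨i, j, hij, hj, hsum⟩ := hB.exists_sum_eq_sum_Ico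
    exact Set.mem_iUnion.2 ⟨_, i, j, hij, hj, hsum, rfl⟩

/-- For `A = (1, 3, 3², …, 3^{N-1})` in `ℤ`: if there is an `n`-coloring of the
edges of the complete graph on `{1, …, N+1}` with no monochromatic triangle,
then `Â` can be covered by `n` sumfree subsets of `ℤ` (even though `A` is not
linearly independent over `ℤ`). -/
theorem coveredBySumfree_powers_of_three (N n : ℕ) (hN : 1 ≤ N) (hn : 1 ≤ n)
    (hχ : ∃ χ : ℕ → ℕ → Fin n, ∀ i j k : ℕ,
      1 ≤ i → i < j → j < k → k ≤ N + 1 → ¬(χ i j = χ j k ∧ χ i j = χ i k)) :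
    CoveredBySumfree n (blockSums (List.ofFn fun k : Fin N => (3 : ℤ) ^ (k : ℕ))) :=
  coveredBySumfree_powers_of_three_general N n hχ
end
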